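/- arXiv:2303.10486 — 2 statements merged into one kernel-verified Lean document; each statement's English description precedes it below -/
import Mathlib

section
/- Let k be a field, R = k[x_1,…,x_d], and L a lex-segment ideal of height g with 2 ≤ g < d generated in a single degree δ ≥ 2. Then L can be written as L = I + x_g·L', where I is a monomial ideal contained in (x_1,…,x_{g-1}) satisfying (x_1,…,x_{g-1})·m^{δ-1} ⊆ I, where m = (x_1,…,x_d), and L' is a monomial ideal whose generators involve only the variables x_g,…,x_d. -/
open MvPolynomial

/-- Total degree of an exponent vector. -/
def mdeg {d : ℕ} (v : Fin d →₀ ℕ) : ℕ := v.sum fun _ n => n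

/-- Lexicographic comparison of monomials, with `x_1 > x_2 > ⋯ > x_d`. -/
def lexLt {d : ℕ} (u w : Fin d →₀ ℕ) : Prop :=
  ∃ i : Fin d, u i < w i ∧ ∀ j : Fin d, j < i → u j = w j

/-- Lex-segment ideal generated in degree `δ`. -/
def IsLexSegment {d : ℕ} {k : Type*} [Field k] (δ : ℕ)
    (L : Ideal (MvPolynomial (Fin d) k)) : Prop :=
  (∃ S : Set (Fin d →₀ ℕ), (∀ v ∈ S, mdeg v = δ) ∧
    L = Ideal.span ((fun v => monomial v (1 : k)) '' S)) ∧
  ∀ u w : Fin d →₀ ℕ, mdeg u = δ → mdeg w = δ → monomial u (1 : k) ∈ L →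
    lexLt u w → monomial w (1 : k) ∈ L

/-- `I` is a monomial ideal. -/
def IsMonomialIdeal {d : ℕ} {k : Type*} [Field k]
    (I : Ideal (MvPolynomial (Fin d) k)) : Prop :=
  ∃ S : Set (Fin d →₀ ℕ), I = Ideal.span ((fun v => monomial v (1 : k)) '' S)

/-- Height of an ideal: infimum of the heights of the primes containing it. -/
noncomputable def idealHeight {R : Type*} [CommRing R] (I : Ideal R) : ℕ∞ :=
  ⨅ p ∈ {p : PrimeSpectrum R | I ≤ p.asIdeal}, Order.height p

/-!
Let `Pₙ = (x_1, …, x_n)`; it is prime of height exactly `n` (Krull's height theorem gives `≤`,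
the chain `P₀ < P₁ < ⋯ < Pₙ` gives `≥`). If a degree-`δ` monomial `u` involving one of
`x_1, …, x_{g-1}` were missing from `L`, every generator of `L` would be lex-larger than `u` and
hence would involve one of these variables too, so `L ⊆ P_{g-1}`, contradicting `ht L = g`.
Hence the generators of `L` meeting `x_1, …, x_{g-1}` span an ideal `I` containing
`(x_1, …, x_{g-1}) · m^{δ-1}`. If a generator avoided `x_1, …, x_g`, the lex property would put
`x_1^δ, …, x_{g+1}^δ` in `L`, so `ht L ≥ g + 1`; thus every other generator is divisible by `x_g`.
-/

section Monomials

variable {d : ℕ}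

lemma mdeg_eq_degree (v : Fin d →₀ ℕ) : mdeg v = v.degree := rfl

lemma mdeg_add (u v : Fin d →₀ ℕ) : mdeg (u + v) = mdeg u + mdeg v :=
  map_add Finsupp.degree u v

lemma mdeg_single (i : Fin d) (n : ℕ) : mdeg (Finsupp.single i n) = n :=
  Finsupp.degree_single i n

lemma apply_add_apply_le_mdeg (v : Fin d →₀ ℕ) {i j : Fin d} (hij : i ≠ j) :
    v i + v j ≤ mdeg v := by
  have hle : Finsupp.single i (v i) + Finsupp.single j (v j) ≤ v := by
    intro l
    simp only [Finsupp.add_apply, Finsupp.single_apply]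
    split_ifs <;> simp_all
  simpa [mdeg_eq_degree] using Finsupp.degree_mono hle

lemma lexLt_iff_toLex_lt {u w : Fin d →₀ ℕ} : lexLt u w ↔ toLex u < toLex w := by
  rw [Finsupp.Lex.lt_iff]
  simp only [lexLt, and_comm]
  rfl

lemma lexLt_trichotomy (u w : Fin d →₀ ℕ) : lexLt u w ∨ u = w ∨ lexLt w u := by
  simpa only [lexLt_iff_toLex_lt, toLex_inj] using lt_trichotomy (toLex u) (toLex w)

lemma exists_le_ne_zero_of_lexLt {u v : Fin d →₀ ℕ} (h : lexLt u v) {j : Fin d} (hj : u j ≠ 0) :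
    ∃ l ≤ j, v l ≠ 0 := by
  obtain ⟨i, hlt, heq⟩ := h
  by_cases hij : i ≤ j
  · exact ⟨i, hij, by omega⟩
  · exact ⟨j, le_rfl, heq j (not_le.mp hij) ▸ hj⟩

lemma lexLt_single_mdeg {v : Fin d →₀ ℕ} {i : Fin d} (hv : ∀ l < i, v l = 0)
    (hne : v ≠ Finsupp.single i (mdeg v)) : lexLt v (Finsupp.single i (mdeg v)) := by
  refine ⟨i, ?_, fun l hl => by rw [hv l hl, Finsupp.single_eq_of_ne hl.ne]⟩
  obtain ⟨j, hj⟩ := Finsupp.ne_iff.mp hne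
  rw [Finsupp.single_eq_same]
  by_cases hji : j = i
  · subst hji
    exact lt_of_le_of_ne (Finsupp.le_degree j v) (by simpa using hj)
  · have := apply_add_apply_le_mdeg v (Ne.symm hji)
    rw [Finsupp.single_eq_of_ne hji] at hj
    omega

end Monomials

section Height

variable {R : Type*} [CommRing R]

lemma idealHeight_le_height {I p : Ideal R} [hp : p.IsPrime] (h : I ≤ p) :
    idealHeight I ≤ p.height := by
  rw [PrimeSpectrum.height_eq_orderHeight ⟨p, hp⟩]
  exact biInf_le (fun q : PrimeSpectrum R => Order.height q) h

lemma height_le_idealHeight_of_le_radical {I J : Ideal R} (h : J ≤ I.radical) :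
    J.height ≤ idealHeight I :=
  le_iInf₂ fun p hp => PrimeSpectrum.height_eq_orderHeight p ▸
    Ideal.height_mono (h.trans (p.isPrime.radical_le_iff.mpr hp))

end Height

section VariableIdeals

variable {σ R : Type*} [CommRing R]

lemma isPrime_span_X_image [IsDomain R] (s : Set σ) :
    (Ideal.span (X '' s : Set (MvPolynomial σ R))).IsPrime := by
  classical
  set P := Ideal.span (X '' s : Set (MvPolynomial σ R))
  let φ : MvPolynomial σ R →ₐ[R] MvPolynomial σ R := aeval fun i => if i ∈ s then 0 else X i
  have hmk : (Ideal.Quotient.mkₐ R P).comp φ = Ideal.Quotient.mkₐ R P := by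
    ext i
    by_cases hi : i ∈ s
    · simpa [φ, hi] using
        (Ideal.Quotient.eq_zero_iff_mem.mpr (Ideal.subset_span (Set.mem_image_of_mem X hi))).symm
    · simp [φ, hi]
  suffices RingHom.ker φ = P from this ▸ RingHom.ker_isPrime φ
  refine le_antisymm (fun p hp => ?_) (Ideal.span_le.mpr ?_)
  · have := AlgHom.congr_fun hmk p
    rw [AlgHom.comp_apply, RingHom.mem_ker.mp hp, map_zero, Ideal.Quotient.mkₐ_eq_mk] at this
    exact Ideal.Quotient.eq_zero_iff_mem.mp this.symm
  · rintro _ ⟨i, hi, rfl⟩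
    simp [φ, hi]

lemma monomial_one_mem_span_X_image_iff [Nontrivial R] {s : Set σ} {u : σ →₀ ℕ} :
    monomial u (1 : R) ∈ Ideal.span (X '' s) ↔ ∃ i ∈ s, u i ≠ 0 := by
  classical
  simp [mem_ideal_span_X_image, support_monomial]

lemma X_mem_span_X_image_iff [Nontrivial R] {s : Set σ} {i : σ} :
    (X i : MvPolynomial σ R) ∈ Ideal.span (X '' s) ↔ i ∈ s := by
  classical
  rw [X, monomial_one_mem_span_X_image_iff]
  simp [Finsupp.single_apply]

variable (R) in
/-- The paper's `(x_1, …, x_n)`: variables are indexed from `0` by `Fin d`. -/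
noncomputable def varIdeal (d n : ℕ) : Ideal (MvPolynomial (Fin d) R) :=
  Ideal.span (X '' {i : Fin d | (i : ℕ) < n})

variable {d : ℕ}

instance [IsDomain R] (n : ℕ) : (varIdeal R d n).IsPrime := isPrime_span_X_image _

lemma height_varIdeal_le [IsDomain R] [IsNoetherianRing R] (n : ℕ) :
    (varIdeal R d n).height ≤ n := by
  refine (Ideal.height_le_spanFinrank _ Ideal.IsPrime.ne_top').trans ?_
  calc ((varIdeal R d n).spanFinrank : ℕ∞)
      ≤ (X '' {i : Fin d | (i : ℕ) < n} : Set (MvPolynomial (Fin d) R)).encard :=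
        Submodule.spanFinrank_span_le_encard _
    _ ≤ {i : Fin d | (i : ℕ) < n}.encard := Set.encard_image_le _ _
    _ ≤ (Set.Iio n).encard :=
        Set.encard_le_encard_of_injOn (fun i hi => hi) Fin.val_injective.injOn
    _ = n := by rw [← Finset.coe_range, Set.encard_coe_eq_coe_finsetCard, Finset.card_range]

lemma varIdeal_lt_succ [Nontrivial R] {n : ℕ} (hn : n < d) :
    varIdeal R d n < varIdeal R d (n + 1) := by
  refine SetLike.lt_iff_le_and_exists.mpr ⟨Ideal.span_mono (Set.image_mono
    fun i (hi : (i : ℕ) < n) => show (i : ℕ) < n + 1 by omega), X ⟨n, hn⟩, ?_, ?_⟩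
  · exact X_mem_span_X_image_iff.mpr (by simp)
  · exact fun h => by simpa using X_mem_span_X_image_iff.mp h

lemma le_height_varIdeal [IsDomain R] {n : ℕ} (hn : n ≤ d) :
    (n : ℕ∞) ≤ (varIdeal R d n).height := by
  induction n with
  | zero => simp
  | succ n ih =>
    calc ((n + 1 : ℕ) : ℕ∞) ≤ (varIdeal R d n).height + 1 := by
          push_cast; gcongr; exact ih (by omega)
      _ ≤ (varIdeal R d (n + 1)).height :=
          Ideal.height_add_one_le_of_lt_of_isPrime (varIdeal_lt_succ (by omega))

end VariableIdeals

section MonomialIdeals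

variable {d : ℕ} {R : Type*} [CommRing R]

lemma X_mul_monomial_one (i : Fin d) (v : Fin d →₀ ℕ) :
    (X i : MvPolynomial (Fin d) R) * monomial v 1 = monomial (Finsupp.single i 1 + v) 1 := by
  rw [monomial_single_add, pow_one]

lemma span_range_X_pow_le (n : ℕ) :
    Ideal.span (Set.range (X : Fin d → MvPolynomial (Fin d) R)) ^ n ≤
      Ideal.span ((fun v => monomial v (1 : R)) '' {v | mdeg v = n}) := by
  induction n with
  | zero =>
    rw [pow_zero, Ideal.one_eq_top, top_le_iff, Ideal.eq_top_iff_one]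
    exact Ideal.subset_span ⟨0, map_zero (Finsupp.degree (σ := Fin d) (R := ℕ)), by simp⟩
  | succ n ih =>
    rw [pow_succ, mul_comm]
    refine (Ideal.mul_mono_right ih).trans ?_
    rw [Ideal.span_mul_span', Ideal.span_le]
    rintro _ ⟨_, ⟨i, rfl⟩, _, ⟨v, hv, rfl⟩, rfl⟩
    dsimp only
    rw [X_mul_monomial_one]
    exact Ideal.subset_span ⟨_, show mdeg _ = _ by rw [mdeg_add, mdeg_single, hv, add_comm], rfl⟩

lemma span_X_image_mul_span_range_X_pow_le {s : Set (Fin d)} {S : Set (Fin d →₀ ℕ)} {n : ℕ}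
    (hS : ∀ u, mdeg u = n + 1 → (∃ i ∈ s, u i ≠ 0) → u ∈ S) :
    Ideal.span (X '' s) * Ideal.span (Set.range (X : Fin d → MvPolynomial (Fin d) R)) ^ n ≤
      Ideal.span ((fun v => monomial v (1 : R)) '' S) := by
  refine (Ideal.mul_mono_right (span_range_X_pow_le n)).trans ?_
  rw [Ideal.span_mul_span', Ideal.span_le]
  rintro _ ⟨_, ⟨i, hi, rfl⟩, _, ⟨v, hv, rfl⟩, rfl⟩
  dsimp only
  rw [X_mul_monomial_one]
  refine Ideal.subset_span ⟨_, hS _ ?_ ⟨i, hi, by simp⟩, rfl⟩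
  rw [mdeg_add, mdeg_single, hv, add_comm]

lemma span_monomial_le_span_X_image [Nontrivial R] {s : Set (Fin d)} {S : Set (Fin d →₀ ℕ)}
    (hS : ∀ v ∈ S, ∃ i ∈ s, v i ≠ 0) :
    Ideal.span ((fun v => monomial v (1 : R)) '' S) ≤ Ideal.span (X '' s) :=
  Ideal.span_le.mpr fun _ ⟨v, hv, hmv⟩ => hmv ▸ monomial_one_mem_span_X_image_iff.mpr (hS v hv)

lemma span_monomial_eq_sup_X_mul {T : Set (Fin d →₀ ℕ)} (t : Fin d)
    (hT : ∀ v ∈ T, ∃ i : Fin d, i ≤ t ∧ v i ≠ 0) :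
    Ideal.span ((fun v => monomial v (1 : R)) '' T) =
      Ideal.span ((fun v => monomial v (1 : R)) '' {v ∈ T | ∃ i : Fin d, i < t ∧ v i ≠ 0}) +
        Ideal.span {X t} * Ideal.span ((fun v => monomial v (1 : R)) ''
          ((· - Finsupp.single t 1) '' {v ∈ T | ∀ i : Fin d, i < t → v i = 0})) := by
  have hX : ∀ v ∈ {v ∈ T | ∀ i : Fin d, i < t → v i = 0},
      X t * monomial (v - Finsupp.single t 1) (1 : R) = monomial v 1 := by
    rintro v ⟨hvT, hv⟩
    obtain ⟨i, hit, hvi⟩ := hT v hvT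
    obtain rfl : i = t := hit.eq_or_lt.resolve_right fun h => hvi (hv i h)
    rw [X_mul_monomial_one, add_tsub_cancel_of_le (Finsupp.single_le_iff.mpr (by omega))]
  rw [Ideal.span_mul_span', Set.singleton_mul, Set.image_image, Set.image_image,
    Set.image_congr hX, Ideal.add_eq_sup, ← Ideal.span_union, ← Set.image_union]
  congr 2
  ext v
  by_cases h : ∀ i : Fin d, i < t → v i = 0 <;> simp_all

end MonomialIdeals

namespace IsLexSegment

variable {d : ℕ} {k : Type*} [Field k] {δ : ℕ} {L : Ideal (MvPolynomial (Fin d) k)}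

lemma eq_span_monomials (hL : IsLexSegment δ L) :
    L = Ideal.span ((fun v => monomial v (1 : k)) '' {v | mdeg v = δ ∧ monomial v 1 ∈ L}) := by
  obtain ⟨⟨S, hSdeg, hLS⟩, -⟩ := hL
  refine le_antisymm ?_ (Ideal.span_le.mpr ?_)
  · conv_lhs => rw [hLS]
    exact Ideal.span_mono (Set.image_mono fun v hv =>
      ⟨hSdeg v hv, hLS ▸ Ideal.subset_span (Set.mem_image_of_mem _ hv)⟩)
  · rintro _ ⟨v, hv, rfl⟩
    exact hv.2

lemma lexLt_of_notMem_of_mem (hL : IsLexSegment δ L) {u v : Fin d →₀ ℕ} (hu : mdeg u = δ)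
    (huL : monomial u (1 : k) ∉ L) (hv : mdeg v = δ) (hvL : monomial v (1 : k) ∈ L) :
    lexLt u v := by
  rcases lexLt_trichotomy u v with h | rfl | h
  · exact h
  · exact absurd hvL huL
  · exact absurd (hL.2 v u hv hu hvL h) huL

lemma monomial_mem_of_lt_idealHeight (hL : IsLexSegment δ L) {n : ℕ}
    (hn : (n : ℕ∞) < idealHeight L) {u : Fin d →₀ ℕ} (hu : mdeg u = δ)
    (hlow : ∃ i : Fin d, (i : ℕ) < n ∧ u i ≠ 0) : monomial u (1 : k) ∈ L := by
  obtain ⟨i, hin, hui⟩ := hlow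
  by_contra huL
  suffices L ≤ varIdeal k d n from
    hn.not_ge ((idealHeight_le_height this).trans (height_varIdeal_le n))
  obtain ⟨S, hSdeg, hLS⟩ := hL.1
  rw [hLS]
  refine span_monomial_le_span_X_image fun v hv => ?_
  have hvL : monomial v (1 : k) ∈ L := hLS ▸ Ideal.subset_span (Set.mem_image_of_mem _ hv)
  obtain ⟨l, hli, hvl⟩ := exists_le_ne_zero_of_lexLt
    (hL.lexLt_of_notMem_of_mem hu huL (hSdeg v hv) hvL) hui
  exact ⟨l, lt_of_le_of_lt (Fin.le_def.mp hli) hin, hvl⟩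

lemma exists_lt_ne_zero_of_idealHeight_le (hL : IsLexSegment δ L) {n : ℕ} (hnd : n < d)
    (hn : idealHeight L ≤ n) {v : Fin d →₀ ℕ} (hv : mdeg v = δ) (hvL : monomial v (1 : k) ∈ L) :
    ∃ i : Fin d, (i : ℕ) < n ∧ v i ≠ 0 := by
  by_contra! hvhigh
  have hpow : ∀ i : Fin d, (i : ℕ) < n + 1 → X i ^ δ ∈ L := by
    intro i hi
    rw [X_pow_eq_monomial]
    by_cases hvi : v = Finsupp.single i δ
    · exact hvi ▸ hvL
    · refine hL.2 v _ hv (mdeg_single i δ) hvL ?_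
      rw [← hv] at hvi ⊢
      exact lexLt_single_mdeg (fun l hl => hvhigh l (by omega)) hvi
  have hrad : varIdeal k d (n + 1) ≤ L.radical :=
    Ideal.span_le.mpr fun _ ⟨i, hi, hXi⟩ => hXi ▸ ⟨δ, hpow i hi⟩
  have := (le_height_varIdeal (R := k) (Nat.succ_le_of_lt hnd)).trans
    ((height_le_idealHeight_of_le_radical hrad).trans hn)
  exact absurd this (by norm_cast; omega)

end IsLexSegment

/-- If `L` is a lex-segment ideal of height `g` with `2 ≤ g < d` generated in
degree `δ ≥ 2`, then `L = I + x_g·L'` where `I ⊆ (x_1,…,x_{g-1})` is a monomial ideal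
containing `(x_1,…,x_{g-1})·m^{δ-1}` and `L'` is a monomial ideal whose generators involve
only the variables `x_g,…,x_d`. -/
theorem stmt_6 {d : ℕ} {k : Type*} [Field k] (g δ : ℕ)
    (hg : 2 ≤ g) (hgd : g < d) (hδ : 2 ≤ δ)
    (L : Ideal (MvPolynomial (Fin d) k)) (hL : IsLexSegment δ L)
    (hht : idealHeight L = (g : ℕ∞)) :
    ∃ I L' : Ideal (MvPolynomial (Fin d) k),
      IsMonomialIdeal I ∧
      I ≤ Ideal.span {p | ∃ i : Fin d, (i : ℕ) < g - 1 ∧ p = X i} ∧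
      Ideal.span {p : MvPolynomial (Fin d) k | ∃ i : Fin d, (i : ℕ) < g - 1 ∧ p = X i} *
        (Ideal.span (Set.range (X : Fin d → MvPolynomial (Fin d) k))) ^ (δ - 1) ≤ I ∧
      (∃ S : Set (Fin d →₀ ℕ),
        L' = Ideal.span ((fun v => monomial v (1 : k)) '' S) ∧
        ∀ v ∈ S, ∀ i : Fin d, v i ≠ 0 → g - 1 ≤ (i : ℕ)) ∧
      L = I + Ideal.span {X (⟨g - 1, by omega⟩ : Fin d)} * L' := by
  set t : Fin d := ⟨g - 1, by omega⟩
  set T := {v : Fin d →₀ ℕ | mdeg v = δ ∧ monomial v (1 : k) ∈ L}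
  have hvars : {p : MvPolynomial (Fin d) k | ∃ i : Fin d, (i : ℕ) < g - 1 ∧ p = X i} =
      X '' {i | i < t} := by
    ext p; exact ⟨fun ⟨i, hi, hp⟩ => ⟨i, hi, hp.symm⟩, fun ⟨i, hi, hp⟩ => ⟨i, hi, hp.symm⟩⟩
  have hlow : ∀ u, mdeg u = δ → (∃ i : Fin d, i < t ∧ u i ≠ 0) → u ∈ T := fun u hu hi =>
    ⟨hu, hL.monomial_mem_of_lt_idealHeight (n := g - 1)
      (by rw [hht]; exact_mod_cast (by omega)) hu hi⟩
  have hhigh : ∀ v ∈ T, ∃ i : Fin d, i ≤ t ∧ v i ≠ 0 := fun v ⟨hv, hvL⟩ => by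
    obtain ⟨i, hi, hvi⟩ := hL.exists_lt_ne_zero_of_idealHeight_le hgd hht.le hv hvL
    exact ⟨i, Fin.le_def.mpr (by simp [t]; omega), hvi⟩
  rw [hvars]
  refine ⟨_, _, ⟨_, rfl⟩, ?_, ?_, ⟨_, rfl, ?_⟩,
    hL.eq_span_monomials.trans (span_monomial_eq_sup_X_mul t hhigh)⟩
  · exact span_monomial_le_span_X_image fun v hv => hv.2
  · exact span_X_image_mul_span_range_X_pow_le fun u hu hi => ⟨hlow u (by omega) hi, hi⟩
  · rintro _ ⟨v, ⟨-, hv⟩, rfl⟩ i hvi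
    by_contra! hit
    exact hvi (by simp [hv i hit])
end

section
/- Let R = k[x_1,…,x_d] over a field k, with d ≥ 2, 2 ≤ g ≤ d, δ ≥ 2. Let J_2 = (x_1^δ, …, x_g^δ) + (x_1,…,x_g)·(x_{g+1}^{δ-1},…,x_d^{δ-1}). Then the monomial β = x_1^{dδ-1}·x_2^{δ-1}⋯x_g^{δ-1}·x_{g+1}^{δ-2}⋯x_d^{δ-2} does not belong to J_2^d. -/
/-! A monomial lies in `J₂^d` only if it is divisible by a product of `d` monomial generators
of `J₂`, each of which then divides `β`. Among the generators only `x₁^δ` divides `β`: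
`x_i^δ` with `2 ≤ i ≤ g` exceeds `β` in `x_i`, and `x_i x_j^{δ-1}` with `j > g` exceeds it in
`x_j`. So `x₁^{dδ}` would divide `β`, whose `x₁`-exponent is only `dδ - 1`. -/

open MvPolynomial

namespace MvPolynomial

variable {σ R : Type*} [CommSemiring R]

theorem span_monomial_image_pow_le (S : Set (σ →₀ ℕ)) (n : ℕ) :
    Ideal.span ((fun s => monomial s (1 : R)) '' S) ^ n ≤
      Ideal.span ((fun s => monomial s (1 : R)) ''
        {m | ∃ f : Fin n → σ →₀ ℕ, (∀ i, f i ∈ S) ∧ ∑ i, f i = m}) := by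
  induction n with
  | zero =>
    rw [pow_zero, Ideal.one_eq_top, top_le_iff, Ideal.eq_top_iff_one]
    exact Ideal.subset_span ⟨0, ⟨Fin.elim0, fun i => i.elim0, by simp⟩, by simp⟩
  | succ n ih =>
    rw [pow_succ]
    refine (Ideal.mul_mono_left ih).trans ?_
    rw [Ideal.span_mul_span', Ideal.span_le]
    rintro _ ⟨_, ⟨_, ⟨f, hf, rfl⟩, rfl⟩, _, ⟨s, hs, rfl⟩, rfl⟩
    refine Ideal.subset_span
      ⟨_, ⟨Fin.snoc f s, Fin.lastCases (by simpa) (by simpa), rfl⟩, ?_⟩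
    simp [Fin.sum_univ_castSucc, monomial_mul]

theorem exists_sum_le_of_monomial_mem_span_pow {S : Set (σ →₀ ℕ)} {n : ℕ} {m : σ →₀ ℕ}
    {c : R} (hc : c ≠ 0)
    (h : monomial m c ∈ Ideal.span ((fun s => monomial s (1 : R)) '' S) ^ n) :
    ∃ f : Fin n → σ →₀ ℕ, (∀ i, f i ∈ S) ∧ ∑ i, f i ≤ m := by
  classical
  obtain ⟨_, ⟨f, hf, rfl⟩, hle⟩ :=
    mem_ideal_span_monomial_image.1 (span_monomial_image_pow_le S n h) m
      (mem_support_iff.2 (by rwa [coeff_monomial, if_pos rfl]))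
  exact ⟨f, hf, hle⟩

end MvPolynomial

section J₂

variable {d : ℕ}

noncomputable def J₂ (k : Type*) [CommSemiring k] (g δ : ℕ) :
    Ideal (MvPolynomial (Fin d) k) :=
  Ideal.span {p : MvPolynomial (Fin d) k | ∃ i : Fin d, (i : ℕ) < g ∧ p = X i ^ δ} +
    Ideal.span {p : MvPolynomial (Fin d) k | ∃ i : Fin d, (i : ℕ) < g ∧ p = X i} *
      Ideal.span {p : MvPolynomial (Fin d) k | ∃ j : Fin d, g ≤ (j : ℕ) ∧ p = X j ^ (δ - 1)}

def J₂Exponents (g δ : ℕ) : Set (Fin d →₀ ℕ) :=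
  {s | (∃ i : Fin d, (i : ℕ) < g ∧ s = Finsupp.single i δ) ∨
    ∃ i j : Fin d, (i : ℕ) < g ∧ g ≤ (j : ℕ) ∧
      s = Finsupp.single i 1 + Finsupp.single j (δ - 1)}

theorem J₂_le_span_monomial_J₂Exponents (k : Type*) [CommSemiring k] (g δ : ℕ) :
    (J₂ k g δ : Ideal (MvPolynomial (Fin d) k)) ≤
      Ideal.span ((fun s => monomial s (1 : k)) '' J₂Exponents g δ) := by
  refine sup_le (Ideal.span_le.2 ?_) ?_
  · rintro _ ⟨i, hi, rfl⟩
    exact Ideal.subset_span ⟨_, Or.inl ⟨i, hi, rfl⟩, X_pow_eq_monomial.symm⟩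
  · rw [Ideal.span_mul_span', Ideal.span_le]
    rintro _ ⟨_, ⟨i, hi, rfl⟩, _, ⟨j, hj, rfl⟩, rfl⟩
    refine Ideal.subset_span ⟨_, Or.inr ⟨i, j, hi, hj, rfl⟩, ?_⟩
    dsimp only
    rw [X_pow_eq_monomial, X, monomial_mul, one_mul]

theorem le_apply_zero_of_mem_J₂Exponents [NeZero d] {g δ : ℕ} {s m : Fin d →₀ ℕ}
    (hs : s ∈ J₂Exponents g δ) (hsm : s ≤ m)
    (hlow : ∀ i : Fin d, i ≠ 0 → (i : ℕ) < g → m i < δ)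
    (hhigh : ∀ j : Fin d, j ≠ 0 → g ≤ (j : ℕ) → m j < δ - 1) : δ ≤ s 0 := by
  rcases hs with ⟨i, hi, rfl⟩ | ⟨i, j, hi, hj, rfl⟩
  · by_cases hi0 : i = 0
    · simp [hi0]
    · simpa using (hsm i).trans_lt (hlow i hi0 hi)
  · have hij : i ≠ j := by rintro rfl; omega
    have hj0 : j ≠ 0 := Fin.val_ne_zero_iff.1 (by omega)
    simpa [hij] using (hsm j).trans_lt (hhigh j hj0 hj)

end J₂

theorem stmt_7_general {d : ℕ} {k : Type*} [Field k] (g δ : ℕ)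
    (hd : 2 ≤ d) (hδ : 2 ≤ δ) :
    (∏ i : Fin d, (X i : MvPolynomial (Fin d) k) ^
        (if (i : ℕ) = 0 then d * δ - 1 else if (i : ℕ) < g then δ - 1 else δ - 2)) ∉
      (Ideal.span {p : MvPolynomial (Fin d) k | ∃ i : Fin d, (i : ℕ) < g ∧ p = X i ^ δ} +
        Ideal.span {p : MvPolynomial (Fin d) k | ∃ i : Fin d, (i : ℕ) < g ∧ p = X i} *
          Ideal.span {p : MvPolynomial (Fin d) k |
            ∃ j : Fin d, g ≤ (j : ℕ) ∧ p = X j ^ (δ - 1)}) ^ d := by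
  classical
  have : NeZero d := ⟨by omega⟩
  rw [prod_X_pow]
  set m : Fin d →₀ ℕ := Finsupp.indicator Finset.univ fun i _ =>
    if (i : ℕ) = 0 then d * δ - 1 else if (i : ℕ) < g then δ - 1 else δ - 2
  have hm (i : Fin d) : m i = _ :=
    Finsupp.indicator_of_mem (Finset.mem_univ i) _
  intro hβ
  obtain ⟨f, hfE, hfm⟩ := exists_sum_le_of_monomial_mem_span_pow one_ne_zero
    (Ideal.pow_right_mono (J₂_le_span_monomial_J₂Exponents k g δ) d hβ)
  have hf0 (i : Fin d) : δ ≤ f i 0 :=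
    le_apply_zero_of_mem_J₂Exponents (hfE i)
      ((Finset.single_le_sum (fun _ _ => zero_le) (Finset.mem_univ i)).trans hfm)
      (fun i hi0 hi => by simp [hm, Fin.val_ne_zero_iff.2 hi0, hi]; omega)
      (fun j hj0 hj => by simp [hm, Fin.val_ne_zero_iff.2 hj0, Nat.not_lt.2 hj]; omega)
  have hβ0 : d * δ ≤ d * δ - 1 := calc
    d * δ = ∑ _ : Fin d, δ := by simp
    _ ≤ ∑ i, f i 0 := Finset.sum_le_sum fun i _ => hf0 i
    _ = (∑ i, f i) 0 := (Finsupp.finsetSum_apply _ _ _).symm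
    _ ≤ m 0 := hfm 0
    _ = d * δ - 1 := by simp [hm]
  have hdδ : 4 ≤ d * δ := Nat.mul_le_mul hd hδ
  omega

/-- With `J_2 = (x_1^δ,…,x_g^δ) + (x_1,…,x_g)·(x_{g+1}^{δ-1},…,x_d^{δ-1})`,
the monomial `β = x_1^{dδ-1}·x_2^{δ-1}⋯x_g^{δ-1}·x_{g+1}^{δ-2}⋯x_d^{δ-2}` does not lie in
`J_2^d`. -/
theorem stmt_7 {d : ℕ} {k : Type*} [Field k] (g δ : ℕ)
    (hd : 2 ≤ d) (hg2 : 2 ≤ g) (hgd : g ≤ d) (hδ : 2 ≤ δ) :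
    (∏ i : Fin d, (X i : MvPolynomial (Fin d) k) ^
        (if (i : ℕ) = 0 then d * δ - 1 else if (i : ℕ) < g then δ - 1 else δ - 2)) ∉
      (Ideal.span {p : MvPolynomial (Fin d) k | ∃ i : Fin d, (i : ℕ) < g ∧ p = X i ^ δ} +
        Ideal.span {p : MvPolynomial (Fin d) k | ∃ i : Fin d, (i : ℕ) < g ∧ p = X i} *
          Ideal.span {p : MvPolynomial (Fin d) k |
            ∃ j : Fin d, g ≤ (j : ℕ) ∧ p = X j ^ (δ - 1)}) ^ d :=
  stmt_7_general g δ hd hδ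
end
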